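/- Let X be a Banach space and for each t ∈ [0,T] let ‖·‖_t be a norm on X equivalent to the original, and let C ∈ L¹[0,T] be nonnegative with ‖u‖_s ≤ ‖u‖_t · exp|∫_s^t C(r) dr| for all u ∈ X and s,t ∈ [0,T]. Suppose the family of operators A(t) satisfies ‖(A(t) − λ)^{-1}‖_t ≤ (λ − β)^{-1} for all λ > β and t ∈ [0,T]. Then for every finite increasing sequence 0 ≤ t₁ ≤ … ≤ t_k ≤ T and every s with t₁ ≤ s ≤ t_k, the time-ordered product satisfies ‖∏_{j=1}^k (A(t_j) − λ)^{-1}‖_s ≤ (λ − β)^{-k} · exp(∫_0^T 2 C(r) dr). -/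
import Mathlib


open MeasureTheory

/-- Time-ordered product of operators: for `f : Fin k → (X →L[ℂ] X)`,
`ordProd f = f (k-1) ∘ ⋯ ∘ f 0` (factors with larger index to the left). -/
noncomputable def ordProd {X : Type*} [NormedAddCommGroup X] [NormedSpace ℂ X]
    {k : ℕ} (f : Fin k → (X →L[ℂ] X)) : X →L[ℂ] X :=
  (List.ofFn f).foldl (fun acc g => g.comp acc) (ContinuousLinearMap.id ℂ X)

lemma ordProd_succ' {X : Type*} [NormedAddCommGroup X] [NormedSpace ℂ X]
    {k : ℕ} (f : Fin (k+1) → (X →L[ℂ] X)) :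
    ordProd f = (f (Fin.last k)).comp (ordProd fun j => f j.castSucc) := by
  rw [ordProd, List.ofFn_succ', List.concat_eq_append, List.foldl_append]
  rfl

lemma stmt4_key {X : Type*} [NormedAddCommGroup X] [NormedSpace ℂ X]
    (T β : ℝ)
    (N : ℝ → X → ℝ) (C : ℝ → ℝ)
    (hC_nonneg : ∀ r, 0 ≤ C r)
    (hC_int : IntegrableOn C (Set.Icc 0 T))
    (hN_nonneg : ∀ t u, 0 ≤ N t u)
    (hN_equiv : ∀ s t, s ∈ Set.Icc 0 T → t ∈ Set.Icc 0 T → ∀ u : X,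
      N s u ≤ N t u * Real.exp |∫ r in s..t, C r|)
    (R : ℝ → ℝ → (X →L[ℂ] X))
    (hstab : ∀ t ∈ Set.Icc 0 T, ∀ lam : ℝ, β < lam → ∀ u : X,
      N t (R t lam u) ≤ (lam - β)⁻¹ * N t u)
    (lam : ℝ) (hlam : β < lam) :
    ∀ (k : ℕ) (t : Fin (k+1) → ℝ), Monotone t → (∀ j, t j ∈ Set.Icc 0 T) →
    ∀ u : X, N (t (Fin.last k)) (ordProd (fun j => R (t j) lam) u) ≤
      ((lam - β)⁻¹) ^ (k+1) * Real.exp (∫ r in (t 0)..(t (Fin.last k)), C r) * N (t 0) u := by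
  have hinv : 0 ≤ (lam - β)⁻¹ := le_of_lt (inv_pos.mpr (by linarith))
  have hint : ∀ a b : ℝ, a ∈ Set.Icc 0 T → b ∈ Set.Icc 0 T →
      IntervalIntegrable C volume a b := fun a b ha hb =>
    (hC_int.mono_set (Set.uIcc_subset_Icc ha hb)).intervalIntegrable
  -- norm-change with ordered integral
  have hNE : ∀ a b : ℝ, a ∈ Set.Icc 0 T → b ∈ Set.Icc 0 T → a ≤ b → ∀ v : X,
      N a v ≤ N b v * Real.exp (∫ r in a..b, C r) ∧
      N b v ≤ N a v * Real.exp (∫ r in a..b, C r) := by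
    intro a b ha hb hab v
    have hnn : 0 ≤ ∫ r in a..b, C r :=
      intervalIntegral.integral_nonneg hab fun r _ => hC_nonneg r
    constructor
    · have := hN_equiv a b ha hb v
      rwa [abs_of_nonneg hnn] at this
    · have := hN_equiv b a hb ha v
      rwa [intervalIntegral.integral_symm, abs_neg, abs_of_nonneg hnn] at this
  intro k
  induction k with
  | zero =>
    intro t hmono hmem u
    have h0 : Fin.last 0 = 0 := rfl
    rw [h0]
    have : ordProd (fun j : Fin 1 => R (t j) lam) u = R (t 0) lam u := rfl
    rw [this, intervalIntegral.integral_same, Real.exp_zero, pow_one, mul_one]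
    exact hstab (t 0) (hmem 0) lam hlam u
  | succ k ih =>
    intro t hmono hmem u
    set t' : Fin (k+1) → ℝ := fun j => t j.castSucc with ht'
    have hmono' : Monotone t' := fun a b hab => hmono (by simpa using hab)
    have hmem' : ∀ j, t' j ∈ Set.Icc 0 T := fun j => hmem _
    have ht'0 : t' 0 = t 0 := by simp [ht']
    set tl := t (Fin.last (k+1)) with htl
    set tk := t' (Fin.last k) with htk
    have hkl : tk ≤ tl := hmono (Fin.le_last _)
    set P := ordProd (fun j : Fin (k+1) => R (t' j) lam) with hP
    have hprod : ordProd (fun j => R (t j) lam) u = R tl lam (P u) := by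
      rw [ordProd_succ' (fun j => R (t j) lam)]
      rfl
    have h3 := ih t' hmono' hmem' u
    rw [ht'0] at h3
    have h2 := (hNE tk tl (hmem' _) (hmem _) hkl (P u)).2
    have h1 := hstab tl (hmem _) lam hlam (P u)
    have hI1 : IntervalIntegrable C volume (t 0) tk := hint _ _ (hmem 0) (hmem' _)
    have hI2 : IntervalIntegrable C volume tk tl := hint _ _ (hmem' _) (hmem _)
    calc N tl (ordProd (fun j => R (t j) lam) u) = N tl (R tl lam (P u)) := by rw [hprod]
      _ ≤ (lam - β)⁻¹ * N tl (P u) := h1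
      _ ≤ (lam - β)⁻¹ * (N tk (P u) * Real.exp (∫ r in tk..tl, C r)) := by
          exact mul_le_mul_of_nonneg_left h2 hinv
      _ ≤ (lam - β)⁻¹ * ((((lam - β)⁻¹) ^ (k+1) * Real.exp (∫ r in (t 0)..tk, C r) * N (t 0) u)
            * Real.exp (∫ r in tk..tl, C r)) := by
          apply mul_le_mul_of_nonneg_left _ hinv
          exact mul_le_mul_of_nonneg_right h3 (Real.exp_pos _).le
      _ = ((lam - β)⁻¹) ^ (k+2) *
            (Real.exp (∫ r in (t 0)..tk, C r) * Real.exp (∫ r in tk..tl, C r)) * N (t 0) u := by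
          ring
      _ = ((lam - β)⁻¹) ^ (k+2) * Real.exp (∫ r in (t 0)..tl, C r) * N (t 0) u := by
          rw [← Real.exp_add, intervalIntegral.integral_add_adjacent_intervals hI1 hI2]

/-- stability of a family of resolvents with respect to a family of
time-dependent equivalent norms (Kato).  The operator norms with respect to `N t`
are expressed pointwise.  `R t lam` stands for `(A(t) - lam)⁻¹`. -/
theorem stmt_4
    {X : Type*} [NormedAddCommGroup X] [NormedSpace ℂ X]
    (T β : ℝ) (hT : 0 ≤ T)
    (N : ℝ → X → ℝ) (C : ℝ → ℝ)
    (hC_nonneg : ∀ r, 0 ≤ C r)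
    (hC_int : IntegrableOn C (Set.Icc 0 T))
    (hN_nonneg : ∀ t u, 0 ≤ N t u)
    (hN_equiv : ∀ s t, s ∈ Set.Icc 0 T → t ∈ Set.Icc 0 T → ∀ u : X,
      N s u ≤ N t u * Real.exp |∫ r in s..t, C r|)
    (R : ℝ → ℝ → (X →L[ℂ] X))
    (hstab : ∀ t ∈ Set.Icc 0 T, ∀ lam : ℝ, β < lam → ∀ u : X,
      N t (R t lam u) ≤ (lam - β)⁻¹ * N t u) :
    ∀ (k : ℕ) (t : Fin k → ℝ) (s lam : ℝ), β < lam →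
      Monotone t → (∀ j, t j ∈ Set.Icc 0 T) → s ∈ Set.Icc 0 T →
      ∀ hk : 0 < k, t ⟨0, hk⟩ ≤ s → s ≤ t ⟨k - 1, Nat.sub_lt hk one_pos⟩ →
      ∀ u : X,
        N s (ordProd (fun j => R (t j) lam) u) ≤
          ((lam - β)⁻¹) ^ k * Real.exp (∫ r in (0:ℝ)..T, 2 * C r) * N s u := by
  intro k t s lam hlam hmono hmem hs hk h0s hslast u
  obtain ⟨m, rfl⟩ : ∃ m, k = m + 1 := ⟨k - 1, (Nat.succ_pred_eq_of_pos hk).symm⟩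
  have hinv : 0 ≤ (lam - β)⁻¹ := le_of_lt (inv_pos.mpr (by linarith))
  have hint : ∀ a b : ℝ, a ∈ Set.Icc 0 T → b ∈ Set.Icc 0 T →
      IntervalIntegrable C volume a b := fun a b ha hb =>
    (hC_int.mono_set (Set.uIcc_subset_Icc ha hb)).intervalIntegrable
  have hNE : ∀ a b : ℝ, a ∈ Set.Icc 0 T → b ∈ Set.Icc 0 T → a ≤ b → ∀ v : X,
      N a v ≤ N b v * Real.exp (∫ r in a..b, C r) ∧
      N b v ≤ N a v * Real.exp (∫ r in a..b, C r) := by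
    intro a b ha hb hab v
    have hnn : 0 ≤ ∫ r in a..b, C r :=
      intervalIntegral.integral_nonneg hab fun r _ => hC_nonneg r
    constructor
    · have := hN_equiv a b ha hb v
      rwa [abs_of_nonneg hnn] at this
    · have := hN_equiv b a hb ha v
      rwa [intervalIntegral.integral_symm, abs_neg, abs_of_nonneg hnn] at this
  set t0 := t 0 with ht0
  set tl := t (Fin.last m) with htl
  have h0s' : t0 ≤ s := h0s
  have hsl' : s ≤ tl := hslast
  have h0l : t0 ≤ tl := le_trans h0s' hsl'
  have hmem0 : t0 ∈ Set.Icc 0 T := hmem 0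
  have hmeml : tl ∈ Set.Icc 0 T := hmem _
  set P := ordProd (fun j : Fin (m+1) => R (t j) lam) with hPdef
  have hkey := stmt4_key T β N C hC_nonneg hC_int hN_nonneg hN_equiv R hstab lam hlam
      m t hmono hmem u
  have hA := (hNE s tl hs hmeml hsl' (P u)).1
  have hB := (hNE t0 s hmem0 hs h0s' u).1
  have hNnn : 0 ≤ N s u := hN_nonneg s u
  -- combine
  have hstep : N s (P u) ≤ ((lam - β)⁻¹) ^ (m+1) *
      Real.exp ((∫ r in t0..tl, C r) + (∫ r in s..tl, C r) + (∫ r in t0..s, C r)) * N s u := by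
    calc N s (P u) ≤ N tl (P u) * Real.exp (∫ r in s..tl, C r) := hA
      _ ≤ (((lam - β)⁻¹) ^ (m+1) * Real.exp (∫ r in t0..tl, C r) * N t0 u) *
            Real.exp (∫ r in s..tl, C r) :=
          mul_le_mul_of_nonneg_right hkey (Real.exp_pos _).le
      _ ≤ (((lam - β)⁻¹) ^ (m+1) * Real.exp (∫ r in t0..tl, C r) *
            (N s u * Real.exp (∫ r in t0..s, C r))) * Real.exp (∫ r in s..tl, C r) := by
          apply mul_le_mul_of_nonneg_right _ (Real.exp_pos _).le
          exact mul_le_mul_of_nonneg_left hB (by positivity)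
      _ = ((lam - β)⁻¹) ^ (m+1) *
            (Real.exp (∫ r in t0..tl, C r) * Real.exp (∫ r in s..tl, C r) *
              Real.exp (∫ r in t0..s, C r)) * N s u := by ring
      _ = _ := by rw [← Real.exp_add, ← Real.exp_add]
  have hsum : (∫ r in t0..tl, C r) + (∫ r in s..tl, C r) + (∫ r in t0..s, C r)
      ≤ ∫ r in (0:ℝ)..T, 2 * C r := by
    have hadj : (∫ r in t0..s, C r) + (∫ r in s..tl, C r) = ∫ r in t0..tl, C r :=
      intervalIntegral.integral_add_adjacent_intervals (hint _ _ hmem0 hs) (hint _ _ hs hmeml)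
    have hle : (∫ r in t0..tl, C r) ≤ ∫ r in (0:ℝ)..T, C r := by
      apply intervalIntegral.integral_mono_interval hmem0.1 h0l hmeml.2
      · exact Filter.Eventually.of_forall fun r => hC_nonneg r
      · exact hint 0 T (Set.left_mem_Icc.mpr hT) (Set.right_mem_Icc.mpr hT)
    have h2 : (∫ r in (0:ℝ)..T, 2 * C r) = 2 * ∫ r in (0:ℝ)..T, C r := by
      simpa using intervalIntegral.integral_const_mul (μ := volume) (a := (0:ℝ)) (b := T) 2 C
    rw [h2]
    linarith
  calc N s (P u) ≤ ((lam - β)⁻¹) ^ (m+1) *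
        Real.exp ((∫ r in t0..tl, C r) + (∫ r in s..tl, C r) + (∫ r in t0..s, C r)) * N s u :=
      hstep
    _ ≤ ((lam - β)⁻¹) ^ (m+1) * Real.exp (∫ r in (0:ℝ)..T, 2 * C r) * N s u := by
      apply mul_le_mul_of_nonneg_right _ hNnn
      exact mul_le_mul_of_nonneg_left (Real.exp_le_exp.mpr hsum) (by positivity)
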